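/- Let 𝐏 be a p-toral group with p-discretization P ⊆ 𝐏. Then there exists a (not necessarily continuous) group homomorphism r: 𝐏 → P that splits the inclusion P ↪ 𝐏 (i.e., r restricted to P is the identity). Moreover, any such splitting r has the property that for any other p-discretization P' of 𝐏, the composite P' ↪ 𝐏 → P is a group isomorphism. -/

import Mathlib

open scoped Pointwise
open CategoryTheory

noncomputable section

/-- The Prüfer `p`-group `ℤ/p^∞`, realized as the subgroup of the circle group
consisting of the elements of `p`-power order. -/
def PruferGroup (p : ℕ) : Subgroup Circle where
  carrier := {x | ∃ n : ℕ, x ^ p ^ n = 1}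
  one_mem' := ⟨0, one_pow _⟩
  mul_mem' := by
    rintro a b ⟨n, hn⟩ ⟨m, hm⟩
    refine ⟨n + m, ?_⟩
    rw [mul_pow, pow_add, pow_mul, hn, one_pow, one_mul, mul_comm (p ^ n), pow_mul, hm, one_pow]
  inv_mem' := by
    rintro a ⟨n, hn⟩
    exact ⟨n, by rw [inv_pow, hn, inv_one]⟩

/-- A group is a discrete `p`-torus of rank `r` if it is isomorphic to `(ℤ/p^∞)^r`. -/
def IsDiscretePTorusOfRank (p r : ℕ) (T : Type*) [Group T] : Prop :=
  Nonempty (T ≃* (Fin r → PruferGroup p))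

/-- A group is discrete `p`-toral (of rank `r`, for some `r`) if it is an extension of a
discrete `p`-torus of rank `r` by a finite `p`-group. -/
def IsDiscretePToral (p : ℕ) (P : Type*) [Group P] : Prop :=
  ∃ (r : ℕ) (T : Subgroup P) (hT : T.Normal),
    IsDiscretePTorusOfRank p r T ∧
    (letI := hT; Finite (P ⧸ T) ∧ IsPGroup p (P ⧸ T))

/-- A topological group is a (continuous) torus of rank `r` if it is isomorphic, as a
topological group, to `(S¹)^r`. -/
def IsTorusOfRank (r : ℕ) (T : Type*) [Group T] [TopologicalSpace T] : Prop :=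
  ∃ e : T ≃* (Fin r → Circle), Continuous e ∧ Continuous e.symm

/-- A topological group is `p`-toral of rank `r` if it is a compact group which is an
extension of a torus of rank `r` (its identity component, the maximal torus) by a
finite `p`-group. -/
def IsPToral (p : ℕ) (P : Type*) [Group P] [TopologicalSpace P] [IsTopologicalGroup P] : Prop :=
  CompactSpace P ∧
    ∃ r : ℕ, IsTorusOfRank r (Subgroup.connectedComponentOfOne P) ∧
      ∃ hN : (Subgroup.connectedComponentOfOne P).Normal,
        letI := hN
        Finite (P ⧸ Subgroup.connectedComponentOfOne P) ∧
          IsPGroup p (P ⧸ Subgroup.connectedComponentOfOne P)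

/-- `P` is a maximal discrete `p`-toral subgroup of the subgroup `B`: it is a discrete
`p`-toral subgroup contained in `B`, maximal among discrete `p`-toral subgroups of `B`. -/
def IsMaxDiscretePToralIn (p : ℕ) {G : Type*} [Group G] (P B : Subgroup G) : Prop :=
  P ≤ B ∧ IsDiscretePToral p P ∧
    ∀ Q : Subgroup G, Q ≤ B → IsDiscretePToral p Q → P ≤ Q → Q = P

/-- `P` is a maximal discrete `p`-toral subgroup of `G`. -/
def IsMaxDiscretePToral (p : ℕ) {G : Type*} [Group G] (P : Subgroup G) : Prop :=
  IsMaxDiscretePToralIn p P ⊤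

/-- The image of a subgroup under the conjugation `c_g(x) = g⁻¹ x g`. -/
def conjSubgroup {G : Type*} [Group G] (g : G) (P : Subgroup G) : Subgroup G :=
  Subgroup.map ((MulAut.conj g⁻¹).toMonoidHom) P


/-!
Let `T` be the identity component of `𝐏`: a torus on which the finite `p`-group `𝐏 ⧸ T` acts
by conjugation. Its `p`-primary part `A ≅ (ℤ/p^∞)^r` is divisible, hence a direct summand of `T`,
and averaging a projection over `𝐏 ⧸ T` yields a complement `B` of `A` in `T` that is normal in
`𝐏`. In `𝐏 ⧸ A` the subgroup `T ⧸ A` is uniquely `p`-divisible of `p`-power index, so the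
vanishing of `H²` and `H¹` of finite `p`-groups with such coefficients gives a complement whose
preimage `C` is discrete `p`-toral and contains a conjugate of every `p`-subgroup. Hence the
`p`-discretizations are exactly the conjugates of `C`, and `𝐏 = C ⋉ B` retracts onto `C`.
Finally, a retraction `r` onto `P` restricts on `P' = g⁻¹ P g` to conjugation by `g⁻¹ r(g)`.
-/

section PGroup

variable {p : ℕ}

theorem IsPGroup.pi {ι : Type*} [Finite ι] {H : ι → Type*} [∀ i, Group (H i)]
    (h : ∀ i, IsPGroup p (H i)) : IsPGroup p (∀ i, H i) := by
  intro x
  choose k hk using fun i => h i (x i)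
  have := Fintype.ofFinite ι
  refine ⟨Finset.univ.sup k, funext fun i => orderOf_dvd_iff_pow_eq_one.1 ?_⟩
  exact (orderOf_dvd_of_pow_eq_one (hk i)).trans
    (pow_dvd_pow p (Finset.le_sup (Finset.mem_univ i)))

theorem IsPGroup.of_quotient {G : Type*} [Group G] {N : Subgroup G} [N.Normal]
    (hN : IsPGroup p N) (hQ : IsPGroup p (G ⧸ N)) : IsPGroup p G := by
  intro g
  obtain ⟨k, hk⟩ := hQ g
  have hgN : g ^ p ^ k ∈ N := (QuotientGroup.eq_one_iff _).1 (by rwa [QuotientGroup.mk_pow])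
  obtain ⟨m, hm⟩ := hN ⟨_, hgN⟩
  exact ⟨k + m, by rw [pow_add, pow_mul]; exact congrArg Subtype.val hm⟩

end PGroup

theorem Circle.exists_pow_eq (z : Circle) {n : ℕ} (hn : n ≠ 0) : ∃ w : Circle, w ^ n = z := by
  obtain ⟨t, rfl⟩ := Circle.exp_surjective z
  refine ⟨Circle.exp (t / n), ?_⟩
  rw [← Circle.exp_nsmul, nsmul_eq_mul, mul_div_cancel₀ _ (Nat.cast_ne_zero.2 hn)]

theorem exists_pow_eq_of_mulEquiv_circle {ι M : Type*} [Monoid M] (e : M ≃* (ι → Circle))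
    (x : M) {n : ℕ} (hn : n ≠ 0) : ∃ y : M, y ^ n = x := by
  choose w hw using fun i => Circle.exists_pow_eq (e x i) hn
  exact ⟨e.symm w, by rw [← map_pow, show w ^ n = e x from funext hw, e.symm_apply_apply]⟩

-- `PruferGroup p` is, by definition, `CommGroup.primaryComponent Circle p`.
theorem PruferGroup.isPGroup (p : ℕ) : IsPGroup p (PruferGroup p) :=
  CommGroup.primaryComponent.isPGroup

theorem PruferGroup.exists_pow_eq {p : ℕ} [hp : Fact p.Prime] (x : PruferGroup p) {n : ℕ}
    (hn : n ≠ 0) : ∃ y : PruferGroup p, y ^ n = x := by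
  -- With `n = p ^ v * m` and `p ∤ m`: take an `m`-th root in the `p`-group, then a `p ^ v`-th
  -- root of it in the circle, which again has `p`-power order.
  obtain ⟨v, m, hm, rfl⟩ := Nat.exists_eq_pow_mul_and_not_dvd hn p hp.out.ne_one
  have hcop : p.Coprime m := (Nat.Prime.coprime_iff_not_dvd hp.out).2 hm
  set y := ((PruferGroup.isPGroup p).powEquiv hcop).symm x
  obtain ⟨w, hw⟩ := Circle.exists_pow_eq y (pow_ne_zero v hp.out.ne_zero)
  obtain ⟨k, hk⟩ := y.2
  refine ⟨⟨w, v + k, by rw [pow_add, pow_mul, hw, hk]⟩, Subtype.ext ?_⟩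
  simp only [SubgroupClass.coe_pow, pow_mul, hw]
  exact congrArg Subtype.val (((PruferGroup.isPGroup p).powEquiv hcop).apply_symm_apply x)

theorem PruferGroup.exists_retraction (p : ℕ) [Fact p.Prime] :
    ∃ r : Circle →* PruferGroup p, ∀ x : PruferGroup p, r x = x := by
  let := divisibleByOfSMulRightSurj (Additive (PruferGroup p)) ℕ fun hn x =>
    PruferGroup.exists_pow_eq x.toMul hn
  let := AddGroup.divisibleByIntOfDivisibleByNat (Additive (PruferGroup p))
  obtain ⟨r, hr⟩ := (Module.Baer.of_divisible _).extension_property_addMonoidHom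
    (MonoidHom.toAdditive (PruferGroup p).subtype) Subtype.val_injective (AddMonoidHom.id _)
  exact ⟨MonoidHom.toAdditive.symm r, DFunLike.congr_fun hr⟩

theorem IsDiscretePToral.isPGroup {p : ℕ} {P : Type*} [Group P] (h : IsDiscretePToral p P) :
    IsPGroup p P := by
  obtain ⟨_, _, _, ⟨e⟩, -, hQ⟩ := h
  exact IsPGroup.of_quotient ((IsPGroup.pi fun _ => PruferGroup.isPGroup p).of_equiv e.symm) hQ

theorem IsDiscretePToral.of_mulEquiv {p : ℕ} {G H : Type*} [Group G] [Group H] (f : G ≃* H)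
    (h : IsDiscretePToral p G) : IsDiscretePToral p H := by
  obtain ⟨r, T, hT, ⟨e⟩, _, hQ⟩ := h
  have hT' := hT.map f.toMonoidHom f.surjective
  let q : G ⧸ T ≃* H ⧸ T.map f.toMonoidHom := QuotientGroup.congr T _ f rfl
  refine ⟨r, T.map f.toMonoidHom, hT', ⟨(f.subgroupMap T).symm.trans e⟩, ?_, ?_⟩
  · exact Finite.of_equiv _ q.toEquiv
  · exact hQ.of_equiv q

section PrimaryComponent

open CommGroup

variable {p : ℕ}

theorem CommGroup.map_mem_primaryComponent {G H : Type*} [CommGroup G] [CommGroup H]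
    (f : G →* H) {a : G} (ha : a ∈ primaryComponent G p) :
    f a ∈ primaryComponent H p :=
  ha.imp fun _ hk => by rw [← map_pow, hk, map_one]

theorem map_primaryComponent {G H : Type*} [CommGroup G] [CommGroup H] (e : G ≃* H) :
    (primaryComponent G p).map e.toMonoidHom = primaryComponent H p := by
  ext x
  rw [Subgroup.mem_map_equiv]
  simp only [mem_primaryComponent, ← map_pow, MulEquiv.map_eq_one_iff]

def primaryComponentPiEquiv {ι : Type*} [Finite ι] (H : ι → Type*) [∀ i, CommGroup (H i)]
    (p : ℕ) :
    primaryComponent (∀ i, H i) p ≃* ∀ i, primaryComponent (H i) p where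
  toFun x i := ⟨x.1 i, x.2.imp fun _ hk => congrFun hk i⟩
  invFun y := ⟨fun i => y i, ((IsPGroup.pi fun _ => primaryComponent.isPGroup) y).imp
    fun _ hk => funext fun i => congrArg Subtype.val (congrFun hk i)⟩
  map_mul' _ _ := rfl

variable {ι T : Type*} [Finite ι] [CommGroup T]

def primaryComponentEquivPrufer (e : T ≃* (ι → Circle)) (p : ℕ) :
    primaryComponent T p ≃* (ι → PruferGroup p) :=
  (e.subgroupMap _).trans <|
    (MulEquiv.subgroupCongr (map_primaryComponent e)).trans (primaryComponentPiEquiv _ p)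

theorem exists_retraction_primaryComponent [Fact p.Prime] (e : T ≃* (ι → Circle)) :
    ∃ r : T →* primaryComponent T p, ∀ a : primaryComponent T p, r a = a := by
  obtain ⟨f, hf⟩ := PruferGroup.exists_retraction p
  let E := primaryComponentEquivPrufer e p
  exact ⟨E.symm.toMonoidHom.comp ((MonoidHom.compLeft f ι).comp e.toMonoidHom),
    fun a => E.symm_apply_eq.2 (funext fun i => hf (E a i))⟩

end PrimaryComponent

theorem exists_eq_div_of_crossedHom {Q B : Type*} [Group Q] [Finite Q] [CommGroup B]
    (φ : Q →* MulAut B) (f : Q → B) (hf : ∀ x y, f (x * y) = f x * φ x (f y))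
    (hB : Function.Bijective fun b : B => b ^ Nat.card Q) :
    ∃ d : B, ∀ x, f x = d / φ x d := by
  have := Fintype.ofFinite Q
  set a := ∏ y, f y
  have ha : ∀ x, f x ^ Nat.card Q * φ x a = a := fun x => calc
    f x ^ Nat.card Q * φ x a = ∏ y, f (x * y) := by
      simp only [hf, Finset.prod_mul_distrib, Finset.prod_const, Finset.card_univ,
        Nat.card_eq_fintype_card, a, map_prod]
    _ = a := Fintype.prod_equiv (Equiv.mulLeft x) _ _ fun _ => rfl
  obtain ⟨d, hd⟩ := hB.2 a
  refine ⟨d, fun x => hB.1 ?_⟩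
  simp only [div_pow, ← map_pow, hd]
  exact eq_div_of_mul_eq' (ha x)

-- The abelian case of Mathlib's Schur–Zassenhaus theorem, where coprimality of order and index
-- is only used to make the `index`-th power map bijective.
open MulAction Subgroup.leftTransversals MulOpposite in
open scoped IsMulCommutative in
theorem Subgroup.exists_isComplement'_of_bijective_pow {G : Type*} [Group G] {H : Subgroup G}
    [H.Normal] [IsMulCommutative H] [H.FiniteIndex]
    (hH : Function.Bijective fun h : H => h ^ H.index) :
    ∃ K : Subgroup G, IsComplement' H K := by
  let root := (Equiv.ofBijective _ hH).symm
  have hroot (h : H) : root h ^ H.index = h := (Equiv.ofBijective _ hH).apply_symm_apply h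
  have transitive (β γ : H.QuotientDiff) : ∃ h : H, h • β = γ :=
    Quotient.inductionOn' β <| Quotient.inductionOn' γ fun γ β =>
      Exists.imp (fun _ => Quotient.sound') ⟨root (diff (MonoidHom.id H) γ β),
        (diff_inv _ _ _).symm.trans (inv_eq_one.mpr ((smul_diff' γ β
          (root (diff (MonoidHom.id H) γ β))⁻¹).trans
            (by rw [inv_pow, hroot, mul_inv_cancel])))⟩
  obtain ⟨α⟩ : Nonempty H.QuotientDiff := inferInstance
  refine ⟨stabilizer G α, isComplement'_stabilizer α (fun h hα => ?_) fun g => transitive _ α⟩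
  induction α using Quotient.inductionOn' with | h α => ?_
  refine hH.1 ?_
  calc h ^ H.index = diff (MonoidHom.id H) (op ((h⁻¹ : H) : G) • α) α := by
        rw [← diff_inv, smul_diff', diff_self, one_mul, inv_pow, inv_inv]
    _ = 1 ^ H.index := (Quotient.exact' hα).trans (one_pow H.index).symm

theorem Subgroup.IsComplement'.exists_retraction {G : Type*} [Group G] {H K : Subgroup G}
    [K.Normal] (h : H.IsComplement' K) :
    ∃ r : G →* H, (∀ x : H, r x = x) ∧ ∀ g, g * (r g : G)⁻¹ ∈ K := by
  have hmk (x : H) : (x : G ⧸ K) = h.QuotientMulEquiv.symm x := rfl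
  refine ⟨h.QuotientMulEquiv.toMonoidHom.comp (QuotientGroup.mk' K),
    fun x => by simp [hmk], fun g => ?_⟩
  rw [← QuotientGroup.eq_one_iff, QuotientGroup.mk_mul, QuotientGroup.mk_inv, mul_inv_eq_one]
  simp [hmk]

open scoped IsMulCommutative in
theorem exists_conj_mem_of_isComplement' {G : Type*} [Group G] {M K Q : Subgroup G} [M.Normal]
    [IsMulCommutative M] (hKM : K.IsComplement' M) [Finite Q]
    (hM : Function.Bijective fun m : M => m ^ Nat.card Q) :
    ∃ m ∈ M, ∀ q ∈ Q, m⁻¹ * q * m ∈ K := by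
  obtain ⟨r, -, hr⟩ := hKM.exists_retraction
  -- `f` is a crossed homomorphism; writing it as a coboundary says `d⁻¹ * q * d = r q`.
  let f (q : Q) : M := ⟨q * (r q : G)⁻¹, hr q⟩
  have hf (x y : Q) : f (x * y) = f x * (MulAut.conjNormal.comp Q.subtype) x (f y) := by
    rw [mul_comm]
    ext
    simp [f, MulAut.conjNormal_apply]
    group
  obtain ⟨d, hd⟩ := exists_eq_div_of_crossedHom _ f hf hM
  refine ⟨d, d.2, fun q hq => ?_⟩
  have hq : (q : G) * (r q : G)⁻¹ = (q * d * q⁻¹)⁻¹ * d := by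
    have := hd ⟨q, hq⟩
    rw [div_eq_inv_mul] at this
    simpa [f] using congrArg Subtype.val this
  convert (r q).2 using 1
  rw [← inv_inj, ← mul_right_inj (q : G), hq]
  group

theorem exists_isComplement'_forall_conj_mem {p : ℕ} [Fact p.Prime] {G : Type*} [Group G]
    {M : Subgroup G} [M.Normal] [IsMulCommutative M] [Finite (G ⧸ M)] (hG : IsPGroup p (G ⧸ M))
    (hM : Function.Bijective fun m : M => m ^ p) :
    ∃ K : Subgroup G, K.IsComplement' M ∧
      ∀ Q : Subgroup G, IsPGroup p Q → ∃ m ∈ M, ∀ q ∈ Q, m⁻¹ * q * m ∈ K := by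
  have hpow (k : ℕ) : Function.Bijective fun m : M => m ^ p ^ k := by
    simpa only [pow_iterate] using hM.iterate k
  obtain ⟨j, hj⟩ := IsPGroup.iff_card.1 hG
  have := Subgroup.finiteIndex_of_finite_quotient (H := M)
  obtain ⟨K, hK⟩ := Subgroup.exists_isComplement'_of_bijective_pow (H := M)
    (by rw [Subgroup.index, hj]; exact hpow j)
  refine ⟨K, Subgroup.isComplement'_comm.1 hK, fun Q hQ => ?_⟩
  have : Finite Q := by
    refine Finite.of_injective ((QuotientGroup.mk' M).comp Q.subtype)
      ((injective_iff_map_eq_one _).2 fun q hq => ?_)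
    obtain ⟨n, hn⟩ := hQ q
    have hqM : (q : G) ∈ M := (QuotientGroup.eq_one_iff _).1 hq
    have : (⟨q, hqM⟩ : M) = 1 := (hpow n).1 (by simpa [Subtype.ext_iff] using hn)
    exact Subtype.ext (congrArg Subtype.val this :)
  obtain ⟨k, hk⟩ := IsPGroup.iff_card.1 hQ
  exact exists_conj_mem_of_isComplement' (Subgroup.isComplement'_comm.1 hK) (hk ▸ hpow k)

section Averaging

variable {π T : Type*} [Group π] [Fintype π] [CommGroup T] (φ : π →* MulAut T)

def equivariantAverage (f : T →* T) : T →* T :=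
  ∏ g : π, (φ g).toMonoidHom.comp (f.comp (φ g⁻¹).toMonoidHom)

theorem equivariantAverage_apply (f : T →* T) (x : T) :
    equivariantAverage φ f x = ∏ g : π, φ g (f (φ g⁻¹ x)) := by
  simp [equivariantAverage]

theorem equivariantAverage_map (f : T →* T) (g : π) (x : T) :
    equivariantAverage φ f (φ g x) = φ g (equivariantAverage φ f x) := by
  simp only [equivariantAverage_apply, map_prod]
  refine Fintype.prod_equiv (Equiv.mulLeft g⁻¹) _ _ fun h => ?_
  simp [map_mul]

theorem exists_invariant_isCompl (A : Subgroup T) (hAφ : ∀ g, ∀ a ∈ A, φ g a ∈ A)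
    (r : T →* A) (hr : ∀ a : A, r a = a) (hroot : ∀ x : T, ∃ y, y ^ Fintype.card π = x)
    (hA : ∀ x : T, x ^ Fintype.card π ∈ A → x ∈ A) :
    ∃ B : Subgroup T, (∀ g, ∀ b ∈ B, φ g b ∈ B) ∧ IsCompl A B := by
  -- `s` averages the projection `x ↦ x / r x`: it kills `A` and is `x ↦ x ^ |π|` modulo `A`.
  set s := equivariantAverage φ (MonoidHom.id T / A.subtype.comp r)
  have hsA (a : T) (ha : a ∈ A) : s a = 1 := by
    refine (equivariantAverage_apply φ _ a).trans (Finset.prod_eq_one fun g _ => ?_)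
    simp only [MonoidHom.div_apply, MonoidHom.id_apply, MonoidHom.comp_apply,
      hr ⟨_, hAφ g⁻¹ a ha⟩, Subgroup.coe_subtype, div_self', map_one]
  have hs (x : T) : x ^ Fintype.card π / s x ∈ A := by
    rw [equivariantAverage_apply, ← Finset.card_univ, ← Finset.prod_const,
      ← Finset.prod_div_distrib]
    refine A.prod_mem fun g _ => ?_
    simpa using hAφ g _ (r (φ g⁻¹ x)).2
  refine ⟨s.range, ?_, ?_, ?_⟩
  · rintro g _ ⟨y, rfl⟩
    exact ⟨φ g y, equivariantAverage_map φ _ g y⟩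
  · refine Subgroup.disjoint_def.2 fun {x} hxA ⟨y, hy⟩ => ?_
    have hyA : y ∈ A := hA y (by simpa [hy] using A.mul_mem (hs y) hxA)
    rw [← hy, hsA y hyA]
  · refine codisjoint_iff.2 (eq_top_iff.2 fun x _ => ?_)
    obtain ⟨y, rfl⟩ := hroot x
    have := Subgroup.mul_mem_sup (hs y) (s.mem_range.2 ⟨y, rfl⟩)
    rwa [div_mul_cancel] at this

end Averaging

section Conjugation

variable {G : Type*} [Group G]

theorem mem_conjSubgroup {g x : G} {P : Subgroup G} :
    x ∈ conjSubgroup g P ↔ g * x * g⁻¹ ∈ P := by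
  rw [conjSubgroup, Subgroup.mem_map_equiv]
  simp

theorem conjSubgroup_mul (g h : G) (P : Subgroup G) :
    conjSubgroup (g * h) P = conjSubgroup h (conjSubgroup g P) := by
  ext x
  simp only [mem_conjSubgroup, mul_inv_rev, mul_assoc]

theorem IsDiscretePToral.conjSubgroup {p : ℕ} {P : Subgroup G} (hP : IsDiscretePToral p P)
    (g : G) :
    IsDiscretePToral p (conjSubgroup g P) :=
  hP.of_mulEquiv (MulEquiv.subgroupMap (MulAut.conj g⁻¹) P)

theorem exists_retraction_conjSubgroup {C : Subgroup G} (hC : ∃ r : G →* C, ∀ x : C, r x = x)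
    (g : G) : ∃ r : G →* conjSubgroup g C, ∀ x : conjSubgroup g C, r x = x := by
  obtain ⟨r, hr⟩ := hC
  let f : G →* G := (MulAut.conj g⁻¹).toMonoidHom.comp (C.subtype.comp
    (r.comp (MulAut.conj g).toMonoidHom))
  refine ⟨f.codRestrict _ fun x => mem_conjSubgroup.2 ?_, fun x => Subtype.ext ?_⟩
  · convert (r (g * x * g⁻¹)).2 using 1
    simp only [f, MonoidHom.comp_apply, MulEquiv.coe_toMonoidHom, MulAut.conj_apply,
      Subgroup.coe_subtype]
    group
  · simp only [MonoidHom.codRestrict_apply, f, MonoidHom.comp_apply, MulEquiv.coe_toMonoidHom,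
      MulAut.conj_apply, Subgroup.coe_subtype, hr ⟨_, mem_conjSubgroup.1 x.2⟩]
    group

theorem bijective_restrict_of_retraction {P : Subgroup G} (r : G →* P) (hr : ∀ x : P, r x = x)
    (g : G) : Function.Bijective fun x : conjSubgroup g P => r x := by
  set u := g⁻¹ * r g
  have hr' (x : conjSubgroup g P) : (r x : G) = u⁻¹ * x * u := by
    have hx : (x : G) = g⁻¹ * (g * x * g⁻¹) * g := by group
    rw [hx, map_mul, map_mul, hr ⟨_, mem_conjSubgroup.1 x.2⟩, map_inv]
    simp only [Subgroup.coe_mul, Subgroup.coe_inv, u]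
    group
  refine ⟨fun x y h => Subtype.ext ?_, fun z => ⟨⟨u * z * u⁻¹, mem_conjSubgroup.2 ?_⟩, ?_⟩⟩
  · simpa [hr'] using congrArg Subtype.val h
  · simpa [u, mul_assoc] using P.mul_mem (P.mul_mem (r g).2 z.2) (P.inv_mem (r g).2)
  · exact Subtype.ext ((hr' _).trans (by group))

end Conjugation

theorem IsMaxDiscretePToral.exists_eq_conjSubgroup {G : Type*} [Group G] {p : ℕ}
    {P C : Subgroup G} (hP : IsMaxDiscretePToral p P) (hC : IsDiscretePToral p C)
    (hconj : ∀ Q : Subgroup G, IsPGroup p Q → ∃ g, Q ≤ conjSubgroup g C) :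
    ∃ g, P = conjSubgroup g C := by
  obtain ⟨-, hPdp, hmax⟩ := hP
  obtain ⟨g, hg⟩ := hconj P hPdp.isPGroup
  exact ⟨g, (hmax _ le_top (hC.conjSubgroup g) hg).symm⟩

section Extension

variable {G : Type*} [Group G]

theorem isDiscretePToral_of_inf_eq {p ρ : ℕ} {T A C : Subgroup G} [T.Normal] [Finite (G ⧸ T)]
    (hT : IsPGroup p (G ⧸ T)) (hA : IsDiscretePTorusOfRank p ρ A) (hCT : C ⊓ T = A) :
    IsDiscretePToral p C := by
  obtain ⟨e⟩ := hA
  have hAC : A ≤ C := hCT ▸ inf_le_left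
  have hTA : T.subgroupOf C = A.subgroupOf C := by
    ext x
    simp [Subgroup.mem_subgroupOf, ← hCT]
  let f : C →* G ⧸ T := (QuotientGroup.mk' T).comp C.subtype
  have hker : f.ker = T.subgroupOf C := by
    ext x
    simp [f, Subgroup.mem_subgroupOf]
  let ι := (QuotientGroup.kerLift f).comp
    (QuotientGroup.quotientMulEquivOfEq hker.symm).toMonoidHom
  have hι : Function.Injective ι :=
    (QuotientGroup.kerLift_injective f).comp (MulEquiv.injective _)
  refine ⟨ρ, T.subgroupOf C, inferInstance,
    ⟨((MulEquiv.subgroupCongr hTA).trans (Subgroup.subgroupOfEquivOfLe hAC)).trans e⟩,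
    Finite.of_injective ι hι, hT.of_injective ι hι⟩

theorem exists_retraction_of_inf_eq {T A B C : Subgroup G} [B.Normal] (hCT : C ⊓ T = A)
    (hCT' : C ⊔ T = ⊤) (hAB : A ⊓ B = ⊥) (hAB' : A ⊔ B = T) :
    ∃ r : G →* C, ∀ x : C, r x = x := by
  have hAC : A ≤ C := hCT ▸ inf_le_left
  have hdisj : Disjoint C B := by
    rw [disjoint_iff, ← hAB, ← hCT, inf_assoc, inf_eq_right.2 (hAB' ▸ le_sup_right : B ≤ T)]
  have hsup : C ⊔ B = ⊤ := by
    rw [← hCT', ← hAB', ← sup_assoc, sup_eq_left.2 hAC]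
  obtain ⟨r, hr, -⟩ := (Subgroup.isComplement'_of_disjoint_and_mul_eq_univ hdisj
    (by rw [← Subgroup.mul_normal, hsup, Subgroup.coe_top])).exists_retraction
  exact ⟨r, hr⟩

end Extension

section ConjAction

variable {G : Type*} [Group G]

open scoped IsMulCommutative in
def quotientConjAction (T : Subgroup G) [T.Normal] [IsMulCommutative T] : G ⧸ T →* MulAut T :=
  QuotientGroup.lift T MulAut.conjNormal fun t ht =>
    MulEquiv.ext fun x => Subtype.ext <| by
      have : t * x = x * t := congrArg Subtype.val (mul_comm (⟨t, ht⟩ : T) x)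
      simp [MulAut.conjNormal_apply, this]

theorem normal_map_subtype_of_forall_conjNormal_mem {N : Subgroup G} [N.Normal] {K : Subgroup N}
    (h : ∀ g : G, ∀ k ∈ K, MulAut.conjNormal g k ∈ K) : (K.map N.subtype).Normal :=
  ⟨by rintro _ ⟨k, hk, rfl⟩ g; exact ⟨_, h g k hk, MulAut.conjNormal_apply g k⟩⟩

end ConjAction

open scoped IsMulCommutative in
theorem exists_inf_eq_sup_eq_forall_le_conjSubgroup {p : ℕ} [Fact p.Prime] {G : Type*} [Group G]
    {T A : Subgroup G} [T.Normal] [A.Normal] [IsMulCommutative T] [Finite (G ⧸ T)]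
    (hT : IsPGroup p (G ⧸ T)) (hAT : A ≤ T) (hA : ∀ t ∈ T, t ^ p ∈ A → t ∈ A)
    (hdiv : ∀ t ∈ T, ∃ s ∈ T, s ^ p = t) :
    ∃ C : Subgroup G, C ⊓ T = A ∧ C ⊔ T = ⊤ ∧
      ∀ Q : Subgroup G, IsPGroup p Q → ∃ g, Q ≤ conjSubgroup g C := by
  set M := T.map (QuotientGroup.mk' A)
  have hTM : T = M.comap (QuotientGroup.mk' A) := by
    rw [Subgroup.comap_map_eq_self (by rwa [QuotientGroup.ker_mk'])]
  let e := QuotientGroup.quotientQuotientEquivQuotient A T hAT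
  have : Finite ((G ⧸ A) ⧸ M) := Finite.of_equiv _ e.symm.toEquiv
  have hM : Function.Bijective fun m : M => m ^ p := by
    refine ⟨(injective_iff_map_eq_one (powMonoidHom p : M →* M)).2 fun m hm => ?_, fun m => ?_⟩
    · obtain ⟨_, ⟨t, ht, rfl⟩⟩ := m
      have htA : t ^ p ∈ A := (QuotientGroup.eq_one_iff _).1 (by simpa [Subtype.ext_iff] using hm)
      exact Subtype.ext ((QuotientGroup.eq_one_iff t).2 (hA t ht htA))
    · obtain ⟨_, ⟨t, ht, rfl⟩⟩ := m
      obtain ⟨s, hs, rfl⟩ := hdiv t ht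
      exact ⟨⟨_, s, hs, rfl⟩, rfl⟩
  obtain ⟨K, hK, hconj⟩ := exists_isComplement'_forall_conj_mem (hT.of_equiv e.symm) hM
  refine ⟨K.comap (QuotientGroup.mk' A), ?_, ?_, fun Q hQ => ?_⟩
  · rw [hTM, ← Subgroup.comap_inf, hK.disjoint.eq_bot, MonoidHom.comap_bot,
      QuotientGroup.ker_mk']
  · rw [hTM, Subgroup.comap_sup_eq _ _ _ (QuotientGroup.mk'_surjective A), hK.sup_eq_top,
      Subgroup.comap_top]
  · obtain ⟨_, ⟨t, ht, rfl⟩, hm⟩ := hconj _ (hQ.map (QuotientGroup.mk' A))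
    refine ⟨t⁻¹, fun x hx => mem_conjSubgroup.2 ?_⟩
    simpa using hm _ ⟨x, hx, rfl⟩

open scoped IsMulCommutative in
theorem exists_normal_isCompl_primaryComponent {p : ℕ} [Fact p.Prime] {ι G : Type*} [Finite ι]
    [Group G] {T : Subgroup G} [T.Normal] [IsMulCommutative T] [Finite (G ⧸ T)]
    (hT : IsPGroup p (G ⧸ T)) (e : T ≃* (ι → Circle)) :
    ∃ B : Subgroup T, (B.map T.subtype).Normal ∧ IsCompl (CommGroup.primaryComponent T p) B := by
  let := Fintype.ofFinite (G ⧸ T)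
  obtain ⟨j, hj⟩ := IsPGroup.iff_card.1 hT
  obtain ⟨r, hr⟩ := exists_retraction_primaryComponent (p := p) e
  obtain ⟨B, hB, hAB⟩ := exists_invariant_isCompl (quotientConjAction T) _
    (fun g _ => CommGroup.map_mem_primaryComponent (quotientConjAction T g).toMonoidHom) r hr
    (fun x => exists_pow_eq_of_mulEquiv_circle e x Fintype.card_ne_zero)
    (fun x ⟨k, hk⟩ => ⟨j + k, by rwa [pow_add, pow_mul, ← hj, Nat.card_eq_fintype_card]⟩)
  exact ⟨B, normal_map_subtype_of_forall_conjNormal_mem fun g => hB g, hAB⟩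

open scoped IsMulCommutative in
theorem exists_isDiscretePToral_retract_forall_le_conjSubgroup {p ρ : ℕ} [hp : Fact p.Prime]
    {G : Type*} [Group G] {T : Subgroup G} [T.Normal] [IsMulCommutative T] [Finite (G ⧸ T)]
    (hT : IsPGroup p (G ⧸ T)) (e : T ≃* (Fin ρ → Circle)) :
    ∃ C : Subgroup G, IsDiscretePToral p C ∧ (∃ r : G →* C, ∀ x : C, r x = x) ∧
      ∀ Q : Subgroup G, IsPGroup p Q → ∃ g, Q ≤ conjSubgroup g C := by
  set A := CommGroup.primaryComponent T p
  obtain ⟨B, _, hAB⟩ := exists_normal_isCompl_primaryComponent hT e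
  have : (A.map T.subtype).Normal := normal_map_subtype_of_forall_conjNormal_mem
    fun g _ ha => CommGroup.map_mem_primaryComponent (MulAut.conjNormal g).toMonoidHom ha
  have hAp (t : G) (ht : t ∈ T) (htA : t ^ p ∈ A.map T.subtype) : t ∈ A.map T.subtype := by
    obtain ⟨k, hk⟩ := (Subgroup.mem_map_iff_mem T.subtype_injective (x := ⟨t, ht⟩ ^ p)).1 htA
    exact ⟨⟨t, ht⟩, ⟨k + 1, by rwa [pow_succ', pow_mul]⟩, rfl⟩
  have hdiv (t : G) (ht : t ∈ T) : ∃ s ∈ T, s ^ p = t := by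
    obtain ⟨s, hs⟩ := exists_pow_eq_of_mulEquiv_circle e ⟨t, ht⟩ hp.out.ne_zero
    exact ⟨s, s.2, congrArg Subtype.val hs⟩
  obtain ⟨C, hCT, hCT', hconj⟩ :=
    exists_inf_eq_sup_eq_forall_le_conjSubgroup hT (Subgroup.map_subtype_le A) hAp hdiv
  refine ⟨C, isDiscretePToral_of_inf_eq (ρ := ρ) hT ?_ hCT,
    exists_retraction_of_inf_eq (B := B.map T.subtype) hCT hCT' ?_ ?_, hconj⟩
  · exact ⟨(A.equivMapOfInjective T.subtype T.subtype_injective).symm.trans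
      (primaryComponentEquivPrufer e p)⟩
  · rw [← Subgroup.map_inf _ _ _ T.subtype_injective, hAB.inf_eq_bot, Subgroup.map_bot]
  · rw [← Subgroup.map_sup, hAB.sup_eq_top, ← MonoidHom.range_eq_map, Subgroup.range_subtype]

/-- Let `𝐏` be a `p`-toral group with `p`-discretization `P ⊆ 𝐏`.
There is a (not necessarily continuous) group homomorphism `r : 𝐏 → P` splitting the
inclusion `P ↪ 𝐏`; moreover, for any such splitting `r` and any other
`p`-discretization `P'` of `𝐏`, the composite `P' ↪ 𝐏 → P` is a group isomorphism. -/
theorem retraction_to_pDiscretization (p : ℕ) [Fact p.Prime]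
    (Pbold : Type*) [Group Pbold] [TopologicalSpace Pbold] [IsTopologicalGroup Pbold]
    (hPbold : IsPToral p Pbold)
    (P : Subgroup Pbold) (hP : IsMaxDiscretePToral p P) :
    (∃ r : Pbold →* P, ∀ x : P, r ↑x = x) ∧
      ∀ r : Pbold →* P, (∀ x : P, r ↑x = x) →
        ∀ P' : Subgroup Pbold, IsMaxDiscretePToral p P' →
          Function.Bijective fun x : P' => r ↑x := by
  obtain ⟨-, ρ, ⟨e, -, -⟩, _, _, hpg⟩ := hPbold
  have : IsMulCommutative (Subgroup.connectedComponentOfOne Pbold) :=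
    ⟨⟨fun x y => e.injective (by rw [map_mul, map_mul, mul_comm])⟩⟩
  obtain ⟨C, hC, hCr, hconj⟩ := exists_isDiscretePToral_retract_forall_le_conjSubgroup hpg e
  obtain ⟨d, rfl⟩ := hP.exists_eq_conjSubgroup hC hconj
  refine ⟨exists_retraction_conjSubgroup hCr d, fun r hr P' hP' => ?_⟩
  obtain ⟨d', rfl⟩ := hP'.exists_eq_conjSubgroup hC hconj
  rw [show d' = d * (d⁻¹ * d') by group, conjSubgroup_mul]
  exact bijective_restrict_of_retraction r hr _

end
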